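/- (Achievability of the controlled-energy-measurement bound.) Let U, S : ℝ → (d×d complex matrices) be families of unitary matrices differentiable at θ₀, with Hermitian local generators g[U] := i U′(θ₀)U(θ₀)† and g[S] := i S′(θ₀)S(θ₀)†. Suppose there exist unit eigenvectors v₁ of g[S] for its largest eigenvalue and v_d of g[S] for its smallest eigenvalue such that every entry of v₁ and the corresponding entry of v_d have equal complex modulus: |(v₁)_j| = |(v_d)_j| for all j = 1,…,d. Then there exist a unitary d×d matrix V and a unit vector ψ₀ ∈ ℂ^d such that, with Ũ(θ) := S(θ)VU(θ), ρ₀ := ψ₀ψ₀† and p_j(θ) := (Ũ(θ)ρ₀Ũ(θ)†)_{jj}, the Fisher information Σ_{j : p_j(θ₀) ≠ 0} (p_j′(θ₀))²/p_j(θ₀) equals [σ(g[U]) + σ(g[S])]². -/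

import Mathlib

/-!
Choose orthonormal eigenvectors `u₁, u₂` of `g[U]` for its extremal eigenvalues `l₁ ≥ l₂`, and
orthonormal eigenvectors `w₁, w₂` of `g[S]` for `a ≥ b` with `|w₁ j| = |w₂ j|`. Let `V` map `u_k`
to `S(θ₀)† w_k` and put `ψ₀ = U(θ₀)† (u₁ + c u₂) / √2` for a unit phase `c`. The measured
amplitudes are then `x + y` with `x = w₁ / √2`, `y = c w₂ / √2`, and their derivative is
`-i (μ x + ν y)` with `μ = l₁ + a`, `ν = l₂ + b`. Since `|x j| = |y j|`, outcome `j` contributes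
`(μ - ν)² |x j - y j|²` to the Fisher information, and by orthonormality these add up to
`(μ - ν)²`. The phase `c` is chosen so that `x j + y j = 0` only where `x j = y j = 0`, so the
outcomes of probability zero would have contributed nothing.
-/

open Matrix
open scoped ComplexOrder

/-- The spectral gap of a matrix: the difference between the largest and smallest eigenvalue
when the matrix is Hermitian (and `0` otherwise, by convention). -/
noncomputable def specGap {d : ℕ} [NeZero d] (M : Matrix (Fin d) (Fin d) ℂ) : ℝ :=
  if h : M.IsHermitian then
    Finset.univ.sup' Finset.univ_nonempty h.eigenvalues
      - Finset.univ.inf' Finset.univ_nonempty h.eigenvalues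
  else 0

section Derivative

variable {𝕜 : Type*} [NontriviallyNormedField 𝕜] {𝔸 : Type*} [NormedCommRing 𝔸]
  [NormedAlgebra 𝕜 𝔸] {l m n : Type*} [Fintype m] {x : 𝕜}

theorem hasDerivAt_matrix_mul_apply {A : 𝕜 → Matrix l m 𝔸} {B : 𝕜 → Matrix m n 𝔸}
    {A' : Matrix l m 𝔸} {B' : Matrix m n 𝔸}
    (hA : ∀ i j, HasDerivAt (fun t => A t i j) (A' i j) x)
    (hB : ∀ i j, HasDerivAt (fun t => B t i j) (B' i j) x) (i : l) (k : n) :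
    HasDerivAt (fun t => (A t * B t) i k) ((A' * B x + A x * B') i k) x := by
  simp only [mul_apply, Matrix.add_apply, ← Finset.sum_add_distrib]
  exact HasDerivAt.fun_sum fun j _ => (hA i j).fun_mul (hB j k)

theorem hasDerivAt_mulVec_apply {A : 𝕜 → Matrix l m 𝔸} {A' : Matrix l m 𝔸}
    (hA : ∀ i j, HasDerivAt (fun t => A t i j) (A' i j) x) (v : m → 𝔸) (i : l) :
    HasDerivAt (fun t => (A t *ᵥ v) i) ((A' *ᵥ v) i) x := by
  simp only [mulVec, dotProduct]
  exact HasDerivAt.fun_sum fun j _ => (hA i j).mul_const (v j)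

theorem hasDerivAt_matrix_mul_const_mul_apply {o : Type*} [Fintype n] {A : 𝕜 → Matrix l m 𝔸}
    {B : 𝕜 → Matrix n o 𝔸} {A' : Matrix l m 𝔸} {B' : Matrix n o 𝔸} (M : Matrix m n 𝔸)
    (hA : ∀ i j, HasDerivAt (fun t => A t i j) (A' i j) x)
    (hB : ∀ i j, HasDerivAt (fun t => B t i j) (B' i j) x) (i : l) (k : o) :
    HasDerivAt (fun t => (A t * M * B t) i k) ((A' * M * B x + A x * M * B') i k) x :=
  (hasDerivAt_matrix_mul_apply (A := fun t => A t * M)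
    (hasDerivAt_matrix_mul_apply (B' := 0) hA fun _ _ => hasDerivAt_const _ _) hB i k).congr_deriv
    (by simp)

end Derivative

theorem re_mul_vecMulVec_mul_conjTranspose_apply {m n : Type*} [Fintype n]
    (A : Matrix m n ℂ) (ψ : n → ℂ) (j : m) :
    ((A * vecMulVec ψ (star ψ) * Aᴴ) j j).re = Complex.normSq ((A *ᵥ ψ) j) := by
  rw [mul_vecMulVec, vecMulVec_mul, ← star_mulVec, vecMulVec_apply, Pi.star_apply,
    Complex.star_def, Complex.mul_conj, Complex.ofReal_re]

theorem hasDerivAt_re_mul_vecMulVec_mul_conjTranspose_apply {m n : Type*} [Fintype n]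
    {A : ℝ → Matrix m n ℂ} {A' : Matrix m n ℂ} {θ : ℝ}
    (hA : ∀ i j, HasDerivAt (fun t => A t i j) (A' i j) θ) (ψ : n → ℂ) (j : m) :
    HasDerivAt (fun t => ((A t * vecMulVec ψ (star ψ) * (A t)ᴴ) j j).re)
      (2 * ((A' *ᵥ ψ) j * star ((A θ *ᵥ ψ) j)).re) θ := by
  simp only [re_mul_vecMulVec_mul_conjTranspose_apply, ← Complex.sq_norm]
  simpa [Complex.inner] using (hasDerivAt_mulVec_apply hA ψ j).norm_sq

noncomputable def fisherInformation {ι : Type*} [Fintype ι] (p p' : ι → ℝ) : ℝ :=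
  ∑ j ∈ Finset.univ.filter (fun j => p j ≠ 0), p' j ^ 2 / p j

theorem Complex.re_star_dotProduct_self {ι : Type*} [Fintype ι] (z : ι → ℂ) :
    (star z ⬝ᵥ z).re = ∑ j, Complex.normSq (z j) := by
  simp [dotProduct, Complex.re_sum, Complex.normSq_apply, Complex.mul_re]

theorem sq_two_re_mul_star_add {x y : ℂ} (h : ‖x‖ = ‖y‖) (μ ν : ℝ) :
    (2 * (-Complex.I * (μ * x + ν * y) * star (x + y)).re) ^ 2
      = (μ - ν) ^ 2 * (Complex.normSq (x + y) * Complex.normSq (x - y)) := by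
  have h2 : Complex.normSq x = Complex.normSq y := by rw [← Complex.sq_norm, h, Complex.sq_norm]
  rw [Complex.normSq_apply, Complex.normSq_apply] at h2
  simp only [Complex.star_def, Complex.normSq_apply, Complex.mul_re, Complex.mul_im,
    Complex.add_re, Complex.add_im, Complex.sub_re, Complex.sub_im, Complex.neg_re,
    Complex.neg_im, Complex.I_re, Complex.I_im, Complex.ofReal_re, Complex.ofReal_im,
    Complex.conj_re, Complex.conj_im]
  linear_combination -(μ - ν) ^ 2 * (x.re ^ 2 + x.im ^ 2 - y.re ^ 2 - y.im ^ 2) * h2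

theorem fisherInformation_two_phase {ι : Type*} [Fintype ι] {x y : ι → ℂ}
    (hxy : ∀ j, ‖x j‖ = ‖y j‖) (hzero : ∀ j, x j + y j = 0 → x j = 0) (μ ν : ℝ) :
    fisherInformation (fun j => Complex.normSq (x j + y j))
        (fun j => 2 * (-Complex.I * (μ * x j + ν * y j) * star (x j + y j)).re)
      = (μ - ν) ^ 2 * (star (x - y) ⬝ᵥ (x - y)).re := by
  rw [Complex.re_star_dotProduct_self, Finset.mul_sum, fisherInformation]
  refine (Finset.sum_congr rfl fun j hj => ?_).trans
    (Finset.sum_subset (Finset.filter_subset _ _) fun j _ hj => ?_)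
  · rw [sq_two_re_mul_star_add (hxy j), Pi.sub_apply, mul_comm (Complex.normSq _),
      ← mul_assoc, mul_div_cancel_right₀ _ (Finset.mem_filter.mp hj).2]
  · simp only [Finset.mem_filter, Finset.mem_univ, true_and, not_not, map_eq_zero] at hj
    have hx : x j = 0 := hzero j hj
    have hy : y j = 0 := norm_eq_zero.mp (by rw [← hxy j, hx, norm_zero])
    simp [hx, hy]

section OrthonormalPair

variable {n : Type*} [Fintype n] {R : Type*} [CommRing R] [StarRing R] {u v : n → R}

def OrthonormalPair (u v : n → R) : Prop :=
  star u ⬝ᵥ u = 1 ∧ star v ⬝ᵥ v = 1 ∧ star u ⬝ᵥ v = 0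

theorem OrthonormalPair.star_smul_add_smul_dotProduct (h : OrthonormalPair u v) (α β γ δ : R) :
    star (α • u + β • v) ⬝ᵥ (γ • u + δ • v) = star α * γ + star β * δ := by
  obtain ⟨hu, hv, huv⟩ := h
  have hvu : star v ⬝ᵥ u = 0 := by rw [star_dotProduct, huv, star_zero]
  simp only [star_add, star_smul, add_dotProduct, dotProduct_add, smul_dotProduct,
    dotProduct_smul, smul_eq_mul, hu, hv, huv, hvu]
  ring

variable [DecidableEq n]

theorem star_mulVec_dotProduct_mulVec {A : Matrix n n R} (hA : Aᴴ * A = 1) (x y : n → R) :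
    star (A *ᵥ x) ⬝ᵥ (A *ᵥ y) = star x ⬝ᵥ y := by
  rw [star_mulVec, ← dotProduct_mulVec, mulVec_mulVec, hA, one_mulVec]

theorem OrthonormalPair.mulVec (h : OrthonormalPair u v) {A : Matrix n n R} (hA : Aᴴ * A = 1) :
    OrthonormalPair (A *ᵥ u) (A *ᵥ v) := by
  simpa only [OrthonormalPair, star_mulVec_dotProduct_mulVec hA] using h

end OrthonormalPair

section UnitaryExtension

variable {𝕜 : Type*} [RCLike 𝕜] {n : Type*} [Fintype n] [DecidableEq n]

theorem OrthonormalPair.exists_orthonormalBasis {x₁ x₂ : n → 𝕜} (h : OrthonormalPair x₁ x₂)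
    {i₁ i₂ : n} (hi : i₁ ≠ i₂) :
    ∃ b : OrthonormalBasis n 𝕜 (EuclideanSpace 𝕜 n), (b i₁).ofLp = x₁ ∧ (b i₂).ofLp = x₂ := by
  obtain ⟨h₁, h₂, h₁₂⟩ := h
  have h₂₁ : star x₂ ⬝ᵥ x₁ = 0 := by rw [star_dotProduct, h₁₂, star_zero]
  let v : n → EuclideanSpace 𝕜 n := fun i => WithLp.toLp 2 (if i = i₁ then x₁ else x₂)
  have hv : Orthonormal 𝕜 (({i₁, i₂} : Set n).domRestrict v) := by
    simp only [orthonormal_iff_ite, Subtype.forall, Set.mem_insert_iff, Set.mem_singleton_iff,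
      Set.domRestrict_apply, Subtype.mk.injEq, EuclideanSpace.inner_eq_star_dotProduct,
      dotProduct_comm _ (star _), v]
    rintro _ (rfl | rfl) _ (rfl | rfl) <;> simp [hi, hi.symm, h₁, h₂, h₁₂, h₂₁]
  obtain ⟨b, hb⟩ := hv.exists_orthonormalBasis_extension_of_card_eq (by simp)
  exact ⟨b, by simp [hb i₁ (by simp), v], by simp [hb i₂ (by simp), v, hi.symm]⟩

theorem OrthonormalBasis.exists_unitary_mulVec_eq
    (b b' : OrthonormalBasis n 𝕜 (EuclideanSpace 𝕜 n)) :
    ∃ V : Matrix n n 𝕜, Vᴴ * V = 1 ∧ ∀ i, V *ᵥ (b i).ofLp = (b' i).ofLp := by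
  let e := EuclideanSpace.basisFun n 𝕜
  have hcol : ∀ (c : OrthonormalBasis n 𝕜 (EuclideanSpace 𝕜 n)) i,
      e.toBasis.toMatrix c *ᵥ Pi.single i 1 = (c i).ofLp := by
    intro c i; ext j; simp [e, Module.Basis.toMatrix_apply]
  have hF := mem_unitaryGroup_iff'.mp (e.toMatrix_orthonormalBasis_mem_unitary b)
  have hG := mem_unitaryGroup_iff'.mp (e.toMatrix_orthonormalBasis_mem_unitary b')
  refine ⟨e.toBasis.toMatrix b' * (e.toBasis.toMatrix b)ᴴ, ?_, fun i => ?_⟩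
  · rw [conjTranspose_mul, conjTranspose_conjTranspose, Matrix.mul_assoc,
      ← Matrix.mul_assoc _ (e.toBasis.toMatrix b'), ← star_eq_conjTranspose, hG, Matrix.one_mul,
      mul_eq_one_comm, ← star_eq_conjTranspose, hF]
  · rw [← hcol, ← hcol, mulVec_mulVec, Matrix.mul_assoc, ← star_eq_conjTranspose, hF,
      Matrix.mul_one]

theorem OrthonormalPair.exists_unitary_mulVec_eq [Nontrivial n] {x₁ x₂ y₁ y₂ : n → 𝕜}
    (hx : OrthonormalPair x₁ x₂) (hy : OrthonormalPair y₁ y₂) :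
    ∃ V : Matrix n n 𝕜, Vᴴ * V = 1 ∧ V *ᵥ x₁ = y₁ ∧ V *ᵥ x₂ = y₂ := by
  obtain ⟨i₁, i₂, hi⟩ := exists_pair_ne n
  obtain ⟨b, hb₁, hb₂⟩ := hx.exists_orthonormalBasis hi
  obtain ⟨b', hb'₁, hb'₂⟩ := hy.exists_orthonormalBasis hi
  obtain ⟨V, hV, hVb⟩ := b.exists_unitary_mulVec_eq b'
  exact ⟨V, hV, by rw [← hb₁, ← hb'₁, hVb], by rw [← hb₂, ← hb'₂, hVb]⟩

end UnitaryExtension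

section Spectrum

variable {𝕜 : Type*} [RCLike 𝕜] {n : Type*} [Fintype n] {A : Matrix n n 𝕜}

theorem Matrix.IsHermitian.star_dotProduct_eq_zero_of_mulVec_eq_smul (hA : A.IsHermitian)
    {v w : n → 𝕜} {a b : ℝ} (hv : A *ᵥ v = (a : 𝕜) • v) (hw : A *ᵥ w = (b : 𝕜) • w)
    (hab : a ≠ b) : star w ⬝ᵥ v = 0 := by
  have key : (a : 𝕜) * (star w ⬝ᵥ v) = (b : 𝕜) * (star w ⬝ᵥ v) := by
    calc (a : 𝕜) * (star w ⬝ᵥ v) = star w ⬝ᵥ (A *ᵥ v) := by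
          rw [hv, dotProduct_smul, smul_eq_mul]
      _ = star (A *ᵥ w) ⬝ᵥ v := by rw [dotProduct_mulVec, star_mulVec, hA.eq]
      _ = (b : 𝕜) * (star w ⬝ᵥ v) := by
          rw [hw, star_smul, RCLike.star_def, RCLike.conj_ofReal, smul_dotProduct, smul_eq_mul]
  by_contra hwv
  exact hab (RCLike.ofReal_injective (mul_right_cancel₀ hwv key))

variable [DecidableEq n]

theorem Matrix.IsHermitian.eq_smul_one_of_forall_eigenvalues_eq (hA : A.IsHermitian) {a : ℝ}
    (h : ∀ i, hA.eigenvalues i = a) : A = (a : 𝕜) • 1 := by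
  have hdiag : diagonal (RCLike.ofReal ∘ hA.eigenvalues) = (a : 𝕜) • (1 : Matrix n n 𝕜) := by
    ext i j
    simp [diagonal_apply, h, one_apply]
  rw [hA.spectral_theorem, hdiag, Unitary.conjStarAlgAut_apply, Matrix.mul_smul, Matrix.mul_one,
    Matrix.smul_mul, (mem_unitaryGroup_iff).mp hA.eigenvectorUnitary.2]

theorem Matrix.IsHermitian.exists_orthonormalPair_mulVec_eq_sup'_inf' [Nontrivial n]
    (hA : A.IsHermitian) :
    ∃ u₁ u₂ : n → 𝕜, OrthonormalPair u₁ u₂ ∧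
      A *ᵥ u₁ = ((Finset.univ.sup' Finset.univ_nonempty hA.eigenvalues : ℝ) : 𝕜) • u₁ ∧
      A *ᵥ u₂ = ((Finset.univ.inf' Finset.univ_nonempty hA.eigenvalues : ℝ) : 𝕜) • u₂ := by
  obtain ⟨i, k, hik, hi, hk⟩ : ∃ i k, i ≠ k ∧
      hA.eigenvalues i = Finset.univ.sup' Finset.univ_nonempty hA.eigenvalues ∧
      hA.eigenvalues k = Finset.univ.inf' Finset.univ_nonempty hA.eigenvalues := by
    obtain ⟨i, -, hi⟩ := Finset.exists_mem_eq_sup' Finset.univ_nonempty hA.eigenvalues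
    obtain ⟨k, -, hk⟩ := Finset.exists_mem_eq_inf' Finset.univ_nonempty hA.eigenvalues
    by_cases hik : i = k
    · obtain ⟨k', hk'⟩ := exists_ne i
      refine ⟨i, k', hk'.symm, hi.symm, le_antisymm ?_ (Finset.inf'_le _ (Finset.mem_univ k'))⟩
      rw [hk, ← hik, ← hi]
      exact Finset.le_sup' _ (Finset.mem_univ k')
    · exact ⟨i, k, hik, hi.symm, hk.symm⟩
  have hb := orthonormal_iff_ite.mp hA.eigenvectorBasis.orthonormal
  simp only [EuclideanSpace.inner_eq_star_dotProduct, dotProduct_comm _ (star _)] at hb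
  refine ⟨hA.eigenvectorBasis i, hA.eigenvectorBasis k, ⟨by simpa using hb i i,
    by simpa using hb k k, by simpa [hik] using hb i k⟩, ?_, ?_⟩
  · rw [hA.mulVec_eigenvectorBasis, hi, RCLike.real_smul_eq_coe_smul (K := 𝕜)]
  · rw [hA.mulVec_eigenvectorBasis, hk, RCLike.real_smul_eq_coe_smul (K := 𝕜)]

end Spectrum

theorem exists_norm_eq_one_notMem (s : Finset ℂ) : ∃ c : ℂ, ‖c‖ = 1 ∧ c ∉ s := by
  have hinf : ((↑) '' (Circle.exp '' Set.Icc 0 1) : Set ℂ).Infinite :=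
    ((Set.Icc_infinite zero_lt_one).image
      (Circle.exp_injOn_Icc (by linarith [Real.pi_gt_three]))).image
      Subtype.coe_injective.injOn
  obtain ⟨c, ⟨z, -, rfl⟩, hc⟩ := hinf.exists_notMem_finset s
  exact ⟨z, Circle.norm_coe z, hc⟩

theorem exists_norm_eq_one_forall_add_mul_eq_zero {ι : Type*} [Fintype ι] {x y : ι → ℂ}
    (h : ∀ j, ‖x j‖ = ‖y j‖) : ∃ c : ℂ, ‖c‖ = 1 ∧ ∀ j, x j + c * y j = 0 → x j = 0 := by
  classical
  obtain ⟨c, hc, hcx⟩ := exists_norm_eq_one_notMem (Finset.univ.image fun j => -(x j / y j))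
  refine ⟨c, hc, fun j hj => ?_⟩
  by_cases hy : y j = 0
  · exact norm_eq_zero.mp (by rw [h j, hy, norm_zero])
  · refine absurd (Finset.mem_image.mpr ⟨j, Finset.mem_univ j, ?_⟩) hcx
    field_simp
    linear_combination -hj

theorem Complex.star_inv_sqrt_two_mul_self :
    star ((Real.sqrt 2 : ℂ)⁻¹) * (Real.sqrt 2 : ℂ)⁻¹ = 2⁻¹ := by
  rw [← Complex.ofReal_inv, Complex.star_def, Complex.conj_ofReal, ← Complex.ofReal_mul,
    ← mul_inv, Real.mul_self_sqrt zero_le_two]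
  norm_num

theorem exists_orthonormalPair_norm_eq {n : Type*} [Fintype n] [DecidableEq n] [Nontrivial n] :
    ∃ w₁ w₂ : n → ℂ, OrthonormalPair w₁ w₂ ∧ ∀ j, ‖w₁ j‖ = ‖w₂ j‖ := by
  obtain ⟨i, k, hik⟩ := exists_pair_ne n
  have he : OrthonormalPair (Pi.single i (1 : ℂ)) (Pi.single k 1) := by
    simp [OrthonormalPair, hik]
  set r : ℂ := (Real.sqrt 2 : ℂ)⁻¹
  refine ⟨r • Pi.single i 1 + r • Pi.single k 1, r • Pi.single i 1 + (-r) • Pi.single k 1,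
    ⟨?_, ?_, ?_⟩, fun j => ?_⟩
  · rw [he.star_smul_add_smul_dotProduct, Complex.star_inv_sqrt_two_mul_self]; norm_num
  · rw [he.star_smul_add_smul_dotProduct, star_neg, neg_mul_neg,
      Complex.star_inv_sqrt_two_mul_self]; norm_num
  · rw [he.star_smul_add_smul_dotProduct, mul_neg, add_neg_cancel]
  · by_cases hj : j = k <;> simp [Pi.single_apply, hj, hik.symm]

theorem Matrix.IsHermitian.exists_orthonormalPair_norm_eq_mulVec_eq {n : Type*} [Fintype n]
    [DecidableEq n] [Nontrivial n] {A : Matrix n n ℂ} (hA : A.IsHermitian) {v₁ v₂ : n → ℂ}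
    (hv₁unit : star v₁ ⬝ᵥ v₁ = 1) (hv₂unit : star v₂ ⬝ᵥ v₂ = 1)
    (hv₁ : A *ᵥ v₁ = ((Finset.univ.sup' Finset.univ_nonempty hA.eigenvalues : ℝ) : ℂ) • v₁)
    (hv₂ : A *ᵥ v₂ = ((Finset.univ.inf' Finset.univ_nonempty hA.eigenvalues : ℝ) : ℂ) • v₂)
    (hmod : ∀ j, ‖v₁ j‖ = ‖v₂ j‖) :
    ∃ w₁ w₂ : n → ℂ, OrthonormalPair w₁ w₂ ∧ (∀ j, ‖w₁ j‖ = ‖w₂ j‖) ∧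
      A *ᵥ w₁ = ((Finset.univ.sup' Finset.univ_nonempty hA.eigenvalues : ℝ) : ℂ) • w₁ ∧
      A *ᵥ w₂ = ((Finset.univ.inf' Finset.univ_nonempty hA.eigenvalues : ℝ) : ℂ) • w₂ := by
  by_cases hab : Finset.univ.sup' Finset.univ_nonempty hA.eigenvalues
      = Finset.univ.inf' Finset.univ_nonempty hA.eigenvalues
  · -- `A` is scalar, so `v₁` and `v₂` may coincide, but every vector is an eigenvector.
    have hscalar := hA.eq_smul_one_of_forall_eigenvalues_eq fun i => le_antisymm
      (Finset.le_sup' _ (Finset.mem_univ i)) (hab ▸ Finset.inf'_le _ (Finset.mem_univ i))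
    obtain ⟨w₁, w₂, hw, hwmod⟩ := exists_orthonormalPair_norm_eq (n := n)
    have hA_mulVec : ∀ v, A *ᵥ v = _ := fun v =>
      (congrArg (· *ᵥ v) hscalar).trans (by rw [smul_mulVec, one_mulVec])
    exact ⟨w₁, w₂, hw, hwmod, hA_mulVec w₁, by rw [hA_mulVec, hab]; rfl⟩
  · exact ⟨v₁, v₂, ⟨hv₁unit, hv₂unit,
      hA.star_dotProduct_eq_zero_of_mulVec_eq_smul hv₂ hv₁ (Ne.symm hab)⟩, hmod, hv₁, hv₂⟩

theorem mulVec_eq_of_I_smul_mulVec_eq {n : Type*} [Fintype n] {M : Matrix n n ℂ} {v : n → ℂ}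
    {l : ℝ} (h : (Complex.I • M) *ᵥ v = (l : ℂ) • v) : M *ᵥ v = -Complex.I • (l : ℂ) • v := by
  rw [← h, smul_mulVec, smul_smul]
  simp

theorem exists_unitary_fisherInformation_eq {n : Type*} [Fintype n] [DecidableEq n]
    [Nontrivial n] {U₀ S₀ U' S' : Matrix n n ℂ} (hU₀ : U₀ᴴ * U₀ = 1) (hS₀ : S₀ᴴ * S₀ = 1)
    {u₁ u₂ w₁ w₂ : n → ℂ} {l₁ l₂ a b : ℝ} (hu : OrthonormalPair u₁ u₂)
    (hu₁ : (Complex.I • (U' * U₀ᴴ)) *ᵥ u₁ = (l₁ : ℂ) • u₁)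
    (hu₂ : (Complex.I • (U' * U₀ᴴ)) *ᵥ u₂ = (l₂ : ℂ) • u₂) (hw : OrthonormalPair w₁ w₂)
    (hw₁ : (Complex.I • (S' * S₀ᴴ)) *ᵥ w₁ = (a : ℂ) • w₁)
    (hw₂ : (Complex.I • (S' * S₀ᴴ)) *ᵥ w₂ = (b : ℂ) • w₂) (hmod : ∀ j, ‖w₁ j‖ = ‖w₂ j‖) :
    ∃ (V : Matrix n n ℂ) (ψ : n → ℂ), Vᴴ * V = 1 ∧ star ψ ⬝ᵥ ψ = 1 ∧
      fisherInformation (fun j => Complex.normSq (((S₀ * V * U₀) *ᵥ ψ) j))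
        (fun j => 2 * (((S' * V * U₀ + S₀ * V * U') *ᵥ ψ) j * star (((S₀ * V * U₀) *ᵥ ψ) j)).re)
      = (l₁ + a - (l₂ + b)) ^ 2 := by
  obtain ⟨c, hc, hcw⟩ := exists_norm_eq_one_forall_add_mul_eq_zero hmod
  have hU₀' : U₀ * U₀ᴴ = 1 := mul_eq_one_comm.mp hU₀
  have hS₀' : S₀ * S₀ᴴ = 1 := mul_eq_one_comm.mp hS₀
  obtain ⟨V, hV, hV₁, hV₂⟩ := hu.exists_unitary_mulVec_eq
    (hw.mulVec (A := S₀ᴴ) (by rw [conjTranspose_conjTranspose, hS₀']))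
  set r : ℂ := (Real.sqrt 2 : ℂ)⁻¹
  have hr : star r * r + star (r * c) * (r * c) = 1 := by
    rw [star_mul', mul_mul_mul_comm, Complex.star_inv_sqrt_two_mul_self, Complex.star_def,
      Complex.conj_mul', hc]
    norm_num
  refine ⟨V, U₀ᴴ *ᵥ (r • u₁ + (r * c) • u₂), hV, ?_, ?_⟩
  · rw [star_mulVec_dotProduct_mulVec (by rw [conjTranspose_conjTranspose, hU₀']),
      hu.star_smul_add_smul_dotProduct, hr]
  have hφ : (S₀ * V * U₀) *ᵥ (U₀ᴴ *ᵥ (r • u₁ + (r * c) • u₂)) = r • w₁ + (r * c) • w₂ := by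
    rw [mulVec_mulVec, Matrix.mul_assoc, hU₀', Matrix.mul_one, ← mulVec_mulVec]
    simp only [mulVec_add, mulVec_smul, hV₁, hV₂, mulVec_mulVec, hS₀', one_mulVec]
  have hφ' : (S' * V * U₀ + S₀ * V * U') *ᵥ (U₀ᴴ *ᵥ (r • u₁ + (r * c) • u₂))
      = -Complex.I • (((l₁ + a : ℝ) : ℂ) • (r • w₁) + ((l₂ + b : ℝ) : ℂ) • ((r * c) • w₂)) := by
    rw [mulVec_mulVec, Matrix.add_mul, Matrix.mul_assoc _ U₀, hU₀', Matrix.mul_one,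
      Matrix.mul_assoc _ U', add_mulVec, ← mulVec_mulVec, ← mulVec_mulVec (M := S₀ * V),
      ← mulVec_mulVec (M := S₀)]
    simp only [mulVec_add, mulVec_smul, mulVec_eq_of_I_smul_mulVec_eq hu₁,
      mulVec_eq_of_I_smul_mulVec_eq hu₂, hV₁, hV₂]
    simp only [mulVec_mulVec, hS₀', one_mulVec, mulVec_eq_of_I_smul_mulVec_eq hw₁,
      mulVec_eq_of_I_smul_mulVec_eq hw₂]
    push_cast
    module
  have hxy : ∀ j, ‖(r • w₁) j‖ = ‖((r * c) • w₂) j‖ := fun j => by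
    simp only [Pi.smul_apply, smul_eq_mul, norm_mul, hc, hmod j, mul_one]
  have hzero : ∀ j, (r • w₁) j + ((r * c) • w₂) j = 0 → (r • w₁) j = 0 := fun j hj => by
    have hr0 : r ≠ 0 := by simp [r]
    simp only [Pi.smul_apply, smul_eq_mul] at hj ⊢
    rw [hcw j ((mul_eq_zero.mp (by linear_combination hj)).resolve_left hr0), mul_zero]
  rw [hφ, hφ']
  convert fisherInformation_two_phase hxy hzero (l₁ + a) (l₂ + b) using 1
  · rfl
  rw [sub_eq_add_neg (r • w₁), ← neg_smul, hw.star_smul_add_smul_dotProduct, star_neg,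
    neg_mul_neg, hr, Complex.one_re, mul_one]

theorem re_mul_vecMulVec_mul_conjTranspose_apply_of_unique {n : Type*} [Fintype n]
    [DecidableEq n] [Unique n] {A : Matrix n n ℂ} (hA : Aᴴ * A = 1) {ψ : n → ℂ}
    (hψ : star ψ ⬝ᵥ ψ = 1) (j : n) : ((A * vecMulVec ψ (star ψ) * Aᴴ) j j).re = 1 :=
  calc ((A * vecMulVec ψ (star ψ) * Aᴴ) j j).re = ∑ i, Complex.normSq ((A *ᵥ ψ) i) := by
        rw [re_mul_vecMulVec_mul_conjTranspose_apply, Fintype.sum_unique, Subsingleton.elim j]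
    _ = 1 := by
        rw [← Complex.re_star_dotProduct_self, star_mulVec_dotProduct_mulVec hA, hψ,
          Complex.one_re]

theorem specGap_of_isHermitian {d : ℕ} [NeZero d] {M : Matrix (Fin d) (Fin d) ℂ}
    (hM : M.IsHermitian) :
    specGap M = Finset.univ.sup' Finset.univ_nonempty hM.eigenvalues
      - Finset.univ.inf' Finset.univ_nonempty hM.eigenvalues :=
  dif_pos hM

theorem specGap_fin_one (M : Matrix (Fin 1) (Fin 1) ℂ) : specGap M = 0 := by
  unfold specGap
  split_ifs with hM
  · refine sub_eq_zero.mpr (le_antisymm (Finset.sup'_le _ _ fun i _ => ?_)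
      ((Finset.inf'_le _ (Finset.mem_univ 0)).trans (Finset.le_sup' _ (Finset.mem_univ 0))))
    exact Finset.le_inf' _ _ fun k _ => (congrArg hM.eigenvalues (Subsingleton.elim i k)).le
  · rfl

/-- **Achievability of the controlled-energy-measurement bound.** If the extremal unit
eigenvectors `v₁, vd` of the Hermitian local generator `g[S] = i S′(θ₀)S(θ₀)†` have entrywise
equal complex moduli, then there exist a unitary control `V` and a pure initial preparation
`ψ₀` for which the Fisher information of the controlled energy measurement, with
`Ũ(θ) = S(θ)VU(θ)`, `ρ₀ = ψ₀ψ₀†` and `p_j(θ) = (Ũ(θ)ρ₀Ũ(θ)†)_{jj}`, equals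
`[σ(g[U]) + σ(g[S])]²`. -/
theorem controlled_energy_measurement_bound_achievable {d : ℕ} [NeZero d]
    (U S : ℝ → Matrix (Fin d) (Fin d) ℂ) (θ₀ : ℝ)
    (hUunit : ∀ θ, (U θ)ᴴ * U θ = 1)
    (hSunit : ∀ θ, (S θ)ᴴ * S θ = 1)
    (U' S' : Matrix (Fin d) (Fin d) ℂ)
    (hU' : ∀ i j, HasDerivAt (fun θ => U θ i j) (U' i j) θ₀)
    (hS' : ∀ i j, HasDerivAt (fun θ => S θ i j) (S' i j) θ₀)
    (hgU : (Complex.I • (U' * (U θ₀)ᴴ)).IsHermitian)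
    (hgS : (Complex.I • (S' * (S θ₀)ᴴ)).IsHermitian)
    (v₁ vd : Fin d → ℂ)
    (hv₁unit : star v₁ ⬝ᵥ v₁ = 1) (hvdunit : star vd ⬝ᵥ vd = 1)
    (hv₁ : (Complex.I • (S' * (S θ₀)ᴴ)) *ᵥ v₁
        = ((Finset.univ.sup' Finset.univ_nonempty hgS.eigenvalues : ℝ) : ℂ) • v₁)
    (hvd : (Complex.I • (S' * (S θ₀)ᴴ)) *ᵥ vd
        = ((Finset.univ.inf' Finset.univ_nonempty hgS.eigenvalues : ℝ) : ℂ) • vd)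
    (hmod : ∀ j, ‖v₁ j‖ = ‖vd j‖) :
    ∃ (V : Matrix (Fin d) (Fin d) ℂ) (ψ₀ : Fin d → ℂ) (p' : Fin d → ℝ),
      Vᴴ * V = 1 ∧ star ψ₀ ⬝ᵥ ψ₀ = 1 ∧
      (∀ j, HasDerivAt
          (fun θ => ((S θ * V * U θ * Matrix.vecMulVec ψ₀ (star ψ₀)
            * (S θ * V * U θ)ᴴ) j j).re) (p' j) θ₀) ∧
      ∑ j ∈ Finset.univ.filter
          (fun j => ((S θ₀ * V * U θ₀ * Matrix.vecMulVec ψ₀ (star ψ₀)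
            * (S θ₀ * V * U θ₀)ᴴ) j j).re ≠ 0),
        (p' j) ^ 2 / ((S θ₀ * V * U θ₀ * Matrix.vecMulVec ψ₀ (star ψ₀)
            * (S θ₀ * V * U θ₀)ᴴ) j j).re
      = (specGap (Complex.I • (U' * (U θ₀)ᴴ)) + specGap (Complex.I • (S' * (S θ₀)ᴴ))) ^ 2 := by
  rcases Nat.lt_or_ge d 2 with hd | hd
  · obtain rfl : d = 1 := by have := NeZero.ne d; omega
    refine ⟨1, Pi.single 0 1, 0, by simp, by simp, fun j => ?_, by simp [specGap_fin_one]⟩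
    refine (hasDerivAt_const θ₀ 1).congr_of_eventuallyEq (.of_forall fun θ => ?_)
    exact re_mul_vecMulVec_mul_conjTranspose_apply_of_unique
      (by simp [conjTranspose_mul, Matrix.mul_assoc, ← Matrix.mul_assoc (S θ)ᴴ, hSunit θ, hUunit θ])
      (by simp) j
  · have : Nontrivial (Fin d) := Fin.nontrivial_iff_two_le.mpr hd
    obtain ⟨u₁, u₂, hu, hu₁, hu₂⟩ := hgU.exists_orthonormalPair_mulVec_eq_sup'_inf'
    obtain ⟨w₁, w₂, hw, hwmod, hw₁, hw₂⟩ :=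
      hgS.exists_orthonormalPair_norm_eq_mulVec_eq hv₁unit hvdunit hv₁ hvd hmod
    obtain ⟨V, ψ, hV, hψ, hF⟩ := exists_unitary_fisherInformation_eq (hUunit θ₀) (hSunit θ₀)
      hu hu₁ hu₂ hw hw₁ hw₂ hwmod
    refine ⟨V, ψ, _, hV, hψ, hasDerivAt_re_mul_vecMulVec_mul_conjTranspose_apply
      (hasDerivAt_matrix_mul_const_mul_apply V hS' hU') ψ, ?_⟩
    simp only [re_mul_vecMulVec_mul_conjTranspose_apply]
    rw [specGap_of_isHermitian hgU, specGap_of_isHermitian hgS]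
    simp only [Algebra.algebraMap_self, RingHom.id_apply] at hF
    exact hF.trans (by ring)
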